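/- arXiv:2601.05586 — 2 statements merged into one kernel-verified Lean document; each statement's English description precedes it below -/
import Mathlib

section
/- Let P be a Poisson point process on (D, 𝒟) with s-finite intensity measure λ. Then for every measurable function u : D → [0, ∞), the Laplace functional satisfies E[exp(−∫ u dP)] = exp(−∫_D (1 − e^{−u(x)}) λ(dx)). -/
open MeasureTheory ProbabilityTheory ENNReal

/-- A point process `P` (random counting measure) on `D` is a Poisson point process with
intensity measure `lam`: counts are `ℕ∞`-valued, Poisson distributed with the correct mean
(a.s. infinite when the intensity mass is infinite), and independent over disjoint sets. -/
def IsPoissonPP {Ω D : Type*} [MeasurableSpace Ω] [MeasurableSpace D]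
    (Pr : Measure Ω) (P : Ω → Measure D) (lam : Measure D) : Prop :=
  Measurable P ∧
  (∀ ω, ∀ B : Set D, MeasurableSet B → P ω B = ⊤ ∨ ∃ n : ℕ, P ω B = n) ∧
  (∀ B : Set D, MeasurableSet B → lam B ≠ ⊤ →
      Measure.map (fun ω => P ω B) Pr =
        Measure.map (fun n : ℕ => (n : ℝ≥0∞)) ((poissonPMF (lam B).toNNReal).toMeasure)) ∧
  (∀ B : Set D, MeasurableSet B → lam B = ⊤ → ∀ᵐ ω ∂Pr, P ω B = ⊤) ∧
  (∀ (m : ℕ) (B : Fin m → Set D), (∀ i, MeasurableSet (B i)) →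
      Pairwise (Function.onFun Disjoint B) →
      iIndepFun (fun i ω => P ω (B i)) Pr)

/-- `expNeg t = e^{-t}` for `t : ℝ≥0∞`, with `expNeg ⊤ = 0`. -/
noncomputable def expNeg (t : ℝ≥0∞) : ℝ≥0∞ :=
  if t = ⊤ then 0 else ENNReal.ofReal (Real.exp (-t.toReal))

/-! For a simple function `f`, `∫ f dP = ∑ y * P(f⁻¹{y})` is a combination of independent
Poisson counts over the disjoint fibres of `f`, so `E[exp(-∫ f dP)]` factorises into Poisson
generating functions `E[z^N] = exp(-(1 - z) λ(B))` at `z = e^{-y}`. A measurable `u` is the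
increasing limit of simple functions, and both sides pass to the limit: the left one by dominated
convergence (everything is bounded by `1`), the right one by monotone convergence. -/

open Filter Topology

set_option linter.deprecated false

lemma expNeg_eq_exp_neg (t : ℝ≥0∞) : expNeg t = EReal.exp (-t) := by
  unfold expNeg
  split_ifs with ht
  · simp [ht]
  · rw [← EReal.coe_ennreal_toReal ht, ← EReal.coe_neg, EReal.exp_coe]

lemma expNeg_zero : expNeg 0 = 1 := by simp [expNeg]

lemma expNeg_top : expNeg ⊤ = 0 := by simp [expNeg]

lemma expNeg_add (a b : ℝ≥0∞) : expNeg (a + b) = expNeg a * expNeg b := by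
  simp only [expNeg_eq_exp_neg, EReal.coe_ennreal_add, ← EReal.exp_add]
  rw [EReal.neg_add (.inl (EReal.coe_ennreal_ne_bot _)) (.inr (EReal.coe_ennreal_ne_bot _)),
    sub_eq_add_neg]

lemma expNeg_sum {ι : Type*} (s : Finset ι) (f : ι → ℝ≥0∞) :
    expNeg (∑ i ∈ s, f i) = ∏ i ∈ s, expNeg (f i) := by
  induction s using Finset.cons_induction with
  | empty => exact expNeg_zero
  | cons i s hi ih => rw [Finset.sum_cons, Finset.prod_cons, expNeg_add, ih]

lemma expNeg_mul_natCast (c : ℝ≥0∞) (n : ℕ) : expNeg (c * n) = expNeg c ^ n := by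
  rw [mul_comm, ← nsmul_eq_mul, ← Finset.card_range n, ← Finset.sum_const, expNeg_sum,
    Finset.prod_const]

lemma expNeg_le_one (t : ℝ≥0∞) : expNeg t ≤ 1 := by
  simp [expNeg_eq_exp_neg, EReal.coe_ennreal_nonneg]

lemma expNeg_lt_one {t : ℝ≥0∞} (ht : t ≠ 0) : expNeg t < 1 := by
  simpa [expNeg_eq_exp_neg, pos_iff_ne_zero] using ht

lemma antitone_expNeg : Antitone expNeg := fun a b hab => by
  simpa [expNeg_eq_exp_neg] using hab

lemma continuous_expNeg : Continuous expNeg := by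
  simp_rw [funext expNeg_eq_exp_neg]
  exact ENNReal.continuous_exp.comp (continuous_neg.comp continuous_coe_ennreal_ereal)

lemma measurable_expNeg : Measurable expNeg := continuous_expNeg.measurable

lemma tsum_pow_mul_poissonPMF (r : NNReal) {z : ℝ≥0∞} (hz : z ≤ 1) :
    ∑' n : ℕ, z ^ n * poissonPMF r n = expNeg ((1 - z) * r) := by
  have hz_top : z ≠ ⊤ := ne_top_of_le_ne_top one_ne_top hz
  set a := z.toReal
  have hterm : ∀ n : ℕ, z ^ n * poissonPMF r n
      = ENNReal.ofReal (Real.exp (-r) * ((r * a) ^ n / n.factorial)) := by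
    intro n
    rw [← ENNReal.ofReal_toReal hz_top, ← ENNReal.ofReal_pow ENNReal.toReal_nonneg,
      ← poissonPMFReal_ofReal_eq_poissonPMF, ← ENNReal.ofReal_mul (by positivity),
      poissonPMFReal, mul_pow]
    congr 1
    ring
  have hsum : ∑' n : ℕ, Real.exp (-r) * ((r * a) ^ n / n.factorial)
      = Real.exp (-((1 - a) * r)) := by
    rw [tsum_mul_left, (NormedSpace.expSeries_div_hasSum_exp ((r : ℝ) * a)).tsum_eq,
      ← Real.exp_eq_exp_ℝ, ← Real.exp_add]
    ring_nf
  have hexp : ((1 - z) * r).toReal = (1 - a) * r := by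
    rw [ENNReal.toReal_mul, ENNReal.toReal_sub_of_le hz one_ne_top, toReal_one, coe_toReal]
  rw [tsum_congr hterm, ← ENNReal.ofReal_tsum_of_nonneg (fun n => by positivity)
      ((Real.summable_pow_div_factorial _).mul_left _), hsum, expNeg,
    if_neg (mul_ne_top (by simp) coe_ne_top), hexp]

namespace IsPoissonPP

variable {Ω D : Type*} [MeasurableSpace Ω] [MeasurableSpace D]
  {Pr : Measure Ω} {P : Ω → Measure D} {lam : Measure D}

lemma measurable_apply (h : IsPoissonPP Pr P lam) {B : Set D} (hB : MeasurableSet B) :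
    Measurable fun ω => P ω B :=
  (Measure.measurable_coe hB).comp h.1

lemma iIndepFun_of_pairwise_disjoint {ι : Type*} (h : IsPoissonPP Pr P lam) {B : ι → Set D}
    (hB : ∀ i, MeasurableSet (B i)) (hdisj : Pairwise (Function.onFun Disjoint B)) :
    iIndepFun (fun i ω => P ω (B i)) Pr := by
  refine iIndepFun_iff_finset.2 fun s => ?_
  let e := s.equivFin.symm
  exact (h.2.2.2.2 _ (fun j => B (e j)) (fun j => hB _)
    (hdisj.comp_of_injective (Subtype.val_injective.comp e.injective))).of_precomp e.surjective

lemma lintegral_expNeg_mul_apply [IsProbabilityMeasure Pr] (h : IsPoissonPP Pr P lam)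
    {B : Set D} (hB : MeasurableSet B) (c : ℝ≥0∞) :
    ∫⁻ ω, expNeg (c * P ω B) ∂Pr = expNeg ((1 - expNeg c) * lam B) := by
  rcases eq_or_ne c 0 with rfl | hc
  · simp [expNeg_zero]
  rcases eq_or_ne (lam B) ⊤ with hinf | hfin
  · have hzero : ∀ᵐ ω ∂Pr, expNeg (c * P ω B) = 0 := by
      filter_upwards [h.2.2.2.1 B hB hinf] with ω hω
      rw [hω, mul_top hc, expNeg_top]
    rw [lintegral_congr_ae hzero, lintegral_zero, hinf,
      mul_top (tsub_pos_of_lt (expNeg_lt_one hc)).ne', expNeg_top]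
  have hg : Measurable fun v : ℝ≥0∞ => expNeg (c * v) :=
    measurable_expNeg.comp (measurable_const_mul c)
  calc ∫⁻ ω, expNeg (c * P ω B) ∂Pr
      = ∫⁻ v, expNeg (c * v) ∂(Pr.map fun ω => P ω B) :=
        (lintegral_map hg (h.measurable_apply hB)).symm
    _ = ∫⁻ n : ℕ, expNeg (c * n) ∂(poissonPMF (lam B).toNNReal).toMeasure := by
        rw [h.2.2.1 B hB hfin, lintegral_map hg measurable_from_top]
    _ = ∑' n : ℕ, expNeg c ^ n * poissonPMF (lam B).toNNReal n := by
        rw [lintegral_countable']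
        simp_rw [PMF.toMeasure_apply_singleton _ _ (measurableSet_singleton _),
          expNeg_mul_natCast]
    _ = expNeg ((1 - expNeg c) * lam B) := by
        rw [tsum_pow_mul_poissonPMF _ (expNeg_le_one c), coe_toNNReal hfin]

lemma lintegral_expNeg_lintegral_simpleFunc [IsProbabilityMeasure Pr]
    (h : IsPoissonPP Pr P lam) (f : SimpleFunc D ℝ≥0∞) :
    ∫⁻ ω, expNeg (∫⁻ x, f x ∂P ω) ∂Pr = expNeg (∫⁻ x, (1 - expNeg (f x)) ∂lam) := by
  have hB : ∀ y, MeasurableSet (f ⁻¹' {y}) := f.measurableSet_fiber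
  have hdisj : Pairwise (Function.onFun Disjoint fun y => f ⁻¹' {y}) :=
    fun y z hyz => (Set.disjoint_singleton.2 hyz).preimage f
  have hg : ∀ y : ℝ≥0∞, Measurable fun v => expNeg (y * v) :=
    fun y => measurable_expNeg.comp (measurable_const_mul y)
  calc ∫⁻ ω, expNeg (∫⁻ x, f x ∂P ω) ∂Pr
      = ∫⁻ ω, ∏ y ∈ f.range, expNeg (y * P ω (f ⁻¹' {y})) ∂Pr := by
        simp_rw [SimpleFunc.lintegral_eq_lintegral, SimpleFunc.lintegral, expNeg_sum]
    _ = ∏ y ∈ f.range, ∫⁻ ω, expNeg (y * P ω (f ⁻¹' {y})) ∂Pr :=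
        lintegral_prod_eq_prod_lintegral_of_indepFun _ _
          ((h.iIndepFun_of_pairwise_disjoint hB hdisj).comp _ hg)
          fun y => (hg y).comp (h.measurable_apply (hB y))
    _ = ∏ y ∈ f.range, expNeg ((1 - expNeg y) * lam (f ⁻¹' {y})) :=
        Finset.prod_congr rfl fun y _ => h.lintegral_expNeg_mul_apply (hB y) y
    _ = expNeg (∫⁻ x, (1 - expNeg (f x)) ∂lam) := by
        rw [← expNeg_sum, ← SimpleFunc.map_lintegral, ← SimpleFunc.lintegral_eq_lintegral,
          SimpleFunc.coe_map]
        rfl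

end IsPoissonPP

section MonotoneLimits

variable {D : Type*} [MeasurableSpace D] {f : ℕ → D → ℝ≥0∞} {u : D → ℝ≥0∞}

lemma tendsto_lintegral_one_sub_expNeg (μ : Measure D) (hf : ∀ n, Measurable (f n))
    (hmono : ∀ x, Monotone fun n => f n x)
    (hlim : ∀ x, Tendsto (fun n => f n x) atTop (𝓝 (u x))) :
    Tendsto (fun n => ∫⁻ x, (1 - expNeg (f n x)) ∂μ) atTop
      (𝓝 (∫⁻ x, (1 - expNeg (u x)) ∂μ)) :=
  lintegral_tendsto_of_tendsto_of_monotone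
    (fun n => (measurable_const.sub (measurable_expNeg.comp (hf n))).aemeasurable)
    (ae_of_all _ fun x _ _ hmn => tsub_le_tsub_left (antitone_expNeg (hmono x hmn)) 1)
    (ae_of_all _ fun x => ENNReal.Tendsto.sub tendsto_const_nhds
      ((continuous_expNeg.tendsto _).comp (hlim x)) (.inl one_ne_top))

lemma tendsto_lintegral_expNeg_lintegral {Ω : Type*} [MeasurableSpace Ω] {Pr : Measure Ω}
    [IsFiniteMeasure Pr] {P : Ω → Measure D} (hP : Measurable P) (hf : ∀ n, Measurable (f n))
    (hmono : ∀ x, Monotone fun n => f n x)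
    (hlim : ∀ x, Tendsto (fun n => f n x) atTop (𝓝 (u x))) :
    Tendsto (fun n => ∫⁻ ω, expNeg (∫⁻ x, f n x ∂P ω) ∂Pr) atTop
      (𝓝 (∫⁻ ω, expNeg (∫⁻ x, u x ∂P ω) ∂Pr)) :=
  tendsto_lintegral_of_dominated_convergence 1
    (fun n => measurable_expNeg.comp ((Measure.measurable_lintegral (hf n)).comp hP))
    (fun n => ae_of_all _ fun ω => expNeg_le_one _) (by simp)
    (ae_of_all _ fun ω => (continuous_expNeg.tendsto _).comp
      (lintegral_tendsto_of_tendsto_of_monotone (fun n => (hf n).aemeasurable)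
        (ae_of_all _ hmono) (ae_of_all _ hlim)))

end MonotoneLimits

theorem poissonPP_laplace_functional_general {Ω D : Type*} [MeasurableSpace Ω] [MeasurableSpace D]
    (Pr : Measure Ω) [IsProbabilityMeasure Pr]
    (P : Ω → Measure D) (lam : Measure D)
    (h : IsPoissonPP Pr P lam) (u : D → ℝ≥0∞) (hu : Measurable u) :
    ∫⁻ ω, expNeg (∫⁻ x, u x ∂(P ω)) ∂Pr =
      expNeg (∫⁻ x, (1 - expNeg (u x)) ∂lam) := by
  let v := SimpleFunc.eapprox u
  have hv : ∀ n, Measurable (v n) := fun n => (v n).measurable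
  have hmono : ∀ x, Monotone fun n => v n x :=
    fun x _ _ hmn => SimpleFunc.monotone_eapprox u hmn x
  have hlim := SimpleFunc.tendsto_eapprox hu
  refine tendsto_nhds_unique (tendsto_lintegral_expNeg_lintegral h.1 hv hmono hlim) ?_
  simp_rw [h.lintegral_expNeg_lintegral_simpleFunc]
  exact (continuous_expNeg.tendsto _).comp (tendsto_lintegral_one_sub_expNeg lam hv hmono hlim)

/-- The Laplace functional of a Poisson point process with s-finite intensity `lam`:
`E[exp(-∫ u dP)] = exp(-∫ (1 - e^{-u(x)}) lam(dx))` for every measurable `u : D → [0,∞]`. -/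
theorem poissonPP_laplace_functional {Ω D : Type*} [MeasurableSpace Ω] [MeasurableSpace D]
    (Pr : Measure Ω) [IsProbabilityMeasure Pr]
    (P : Ω → Measure D) (lam : Measure D) [SFinite lam]
    (h : IsPoissonPP Pr P lam) (u : D → ℝ≥0∞) (hu : Measurable u) :
    ∫⁻ ω, expNeg (∫⁻ x, u x ∂(P ω)) ∂Pr =
      expNeg (∫⁻ x, (1 - expNeg (u x)) ∂lam) :=
  poissonPP_laplace_functional_general Pr P lam h u hu
end

section
/- Let P be a Poisson point process on D with s-finite intensity λ, and let D₁, D₂ ∈ 𝒟 be disjoint. Then the restrictions P ∩ D₁ and P ∩ D₂ are independent point processes. -/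
/-!
Only the complete randomness of `P` matters. Given finitely many measurable sets `s₁, …, sₙ`,
each count `P (sᵢ ∩ D₁)` is a sum of counts of the cells of the partition of `D₁` generated by
the `sᵢ`, and likewise on `D₂`; all these cells are pairwise disjoint, so the two finite families
of counts are independent. The σ-algebra of the restriction `P ∩ Dₖ` is generated by the counts
`P (s ∩ Dₖ)`, and finite intersections of their generating events form a π-system, so
independence passes from finite families to the restrictions.
-/

open MeasureTheory ProbabilityTheory ENNReal

open Function
open MeasurableSpace (comap)

section IndepSupremum

variable {Ω ι κ : Type*} {mΩ : MeasurableSpace Ω} {μ : Measure Ω}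
  [IsZeroOrProbabilityMeasure μ]

theorem indep_biSup_of_forall_finset {m : ι → MeasurableSpace Ω} {m' : κ → MeasurableSpace Ω}
    {S : Set ι} {T : Set κ} (hm : ∀ i ∈ S, m i ≤ mΩ) (hm' : ∀ j ∈ T, m' j ≤ mΩ)
    (h : ∀ (F : Finset ι) (G : Finset κ), ↑F ⊆ S → ↑G ⊆ T →
      Indep (⨆ i ∈ F, m i) (⨆ j ∈ G, m' j) μ) :
    Indep (⨆ i ∈ S, m i) (⨆ j ∈ T, m' j) μ := by
  refine IndepSets.indep (iSup₂_le hm) (iSup₂_le hm')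
    (isPiSystem_piiUnionInter _ (fun i => @MeasurableSpace.isPiSystem_measurableSet Ω (m i)) S)
    (isPiSystem_piiUnionInter _ (fun j => @MeasurableSpace.isPiSystem_measurableSet Ω (m' j)) T)
    (generateFrom_piiUnionInter_measurableSet m S).symm
    (generateFrom_piiUnionInter_measurableSet m' T).symm ?_
  rw [IndepSets_iff]
  rintro _ _ ⟨F, hFS, f, hf, rfl⟩ ⟨G, hGT, g, hg, rfl⟩
  exact (Indep_iff _ _ μ).1 (h F G hFS hGT) _ _
    (measurableSet_iSup_of_mem_piiUnionInter m F _ ⟨F, subset_rfl, f, hf, rfl⟩)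
    (measurableSet_iSup_of_mem_piiUnionInter m' G _ ⟨G, subset_rfl, g, hg, rfl⟩)

end IndepSupremum

section Cells

variable {D : Type*}

def partitionCell (A : Set D) (F : Finset (Set D)) (c : F → Bool) : Set D :=
  A ∩ ⋂ s : F, cond (c s) s.1 s.1ᶜ

theorem partitionCell_subset (A : Set D) (F : Finset (Set D)) (c : F → Bool) :
    partitionCell A F c ⊆ A :=
  Set.inter_subset_left

theorem measurableSet_partitionCell [MeasurableSpace D] {A : Set D} (hA : MeasurableSet A)
    {F : Finset (Set D)} (hF : ∀ s ∈ F, MeasurableSet s) (c : F → Bool) :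
    MeasurableSet (partitionCell A F c) := by
  refine hA.inter (MeasurableSet.iInter fun s => ?_)
  cases c s
  · exact (hF s s.2).compl
  · exact hF s s.2

theorem pairwise_disjoint_partitionCell (A : Set D) (F : Finset (Set D)) :
    Pairwise (Disjoint on partitionCell A F) := by
  intro c c' hne
  obtain ⟨s, hs⟩ := Function.ne_iff.mp hne
  rw [onFun, Set.disjoint_left]
  rintro x ⟨-, hx⟩ ⟨-, hx'⟩
  have h := Set.mem_iInter.mp hx s
  have h' := Set.mem_iInter.mp hx' s
  cases hc : c s <;> cases hc' : c' s <;> simp_all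

theorem inter_eq_biUnion_partitionCell (A : Set D) {F : Finset (Set D)} {s : Set D}
    (hs : s ∈ F) :
    s ∩ A = ⋃ c ∈ Finset.univ.filter (fun c : F → Bool => c ⟨s, hs⟩), partitionCell A F c := by
  classical
  ext x
  simp only [Set.mem_iUnion, Finset.mem_filter, Finset.mem_univ, true_and, Set.mem_inter_iff,
    partitionCell, Set.mem_iInter, exists_prop]
  constructor
  · rintro ⟨hxs, hxA⟩
    refine ⟨fun t => decide (x ∈ t.1), by simpa using hxs, hxA, fun t => ?_⟩
    by_cases hxt : x ∈ t.1 <;> simp [hxt]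
  · rintro ⟨c, hcs, hxA, hx⟩
    simpa [hcs] using And.intro (hx ⟨s, hs⟩) hxA

theorem measure_inter_eq_sum_partitionCell [MeasurableSpace D] (μ : Measure D) {A : Set D}
    (hA : MeasurableSet A) {F : Finset (Set D)} (hF : ∀ s ∈ F, MeasurableSet s)
    {s : Set D} (hs : s ∈ F) :
    μ (s ∩ A) = ∑ c ∈ Finset.univ.filter (fun c : F → Bool => c ⟨s, hs⟩),
      μ (partitionCell A F c) := by
  rw [inter_eq_biUnion_partitionCell A hs]
  exact measure_biUnion_finset (fun c _ c' _ hne => pairwise_disjoint_partitionCell A F hne)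
    fun c _ => measurableSet_partitionCell hA hF c

end Cells

section RandomMeasure

variable {Ω D : Type*} [MeasurableSpace D]

theorem comap_restrict_le_biSup_comap_inter (ξ : Ω → Measure D) (A : Set D) :
    comap (fun ω => (ξ ω).restrict A) inferInstance ≤
      ⨆ s ∈ {s : Set D | MeasurableSet s}, comap (fun ω => ξ ω (s ∩ A)) inferInstance := by
  refine Measurable.comap_le (Measure.measurable_of_measurable_coe _ fun s hs => ?_)
  simp_rw [Measure.restrict_apply hs]
  exact Measurable.of_comap_le (le_biSup (fun s => comap (fun ω => ξ ω (s ∩ A)) _) hs)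

theorem biSup_comap_inter_le_iSup_comap_partitionCell (ξ : Ω → Measure D) {A : Set D}
    (hA : MeasurableSet A) {F : Finset (Set D)} (hF : ∀ s ∈ F, MeasurableSet s) :
    ⨆ s ∈ F, comap (fun ω => ξ ω (s ∩ A)) inferInstance ≤
      ⨆ c, comap (fun ω => ξ ω (partitionCell A F c)) inferInstance := by
  refine iSup₂_le fun s hs => Measurable.comap_le ?_
  simp_rw [measure_inter_eq_sum_partitionCell _ hA hF hs]
  exact Finset.measurable_sum _ fun c _ => Measurable.of_comap_le
    (le_iSup (fun c => comap (fun ω => ξ ω (partitionCell A F c)) _) c)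

variable [MeasurableSpace Ω] {Pr : Measure Ω}

def IsCompletelyRandom (Pr : Measure Ω) (ξ : Ω → Measure D) : Prop :=
  ∀ (m : ℕ) (B : Fin m → Set D), (∀ i, MeasurableSet (B i)) →
    Pairwise (Disjoint on B) → iIndepFun (fun i ω => ξ ω (B i)) Pr

theorem IsCompletelyRandom.iIndepFun {ξ : Ω → Measure D} (hξ : IsCompletelyRandom Pr ξ)
    {ι : Type*} [Fintype ι] {B : ι → Set D} (hB : ∀ i, MeasurableSet (B i))
    (hdisj : Pairwise (Disjoint on B)) :
    iIndepFun (fun i ω => ξ ω (B i)) Pr := by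
  let e := Fintype.equivFin ι
  have h := (hξ _ (B ∘ e.symm) (fun i => hB _)
    fun i j hij => hdisj (e.symm.injective.ne hij)).precomp e.injective
  simpa [Function.comp_def] using h

variable {ξ : Ω → Measure D}

theorem IsCompletelyRandom.indep_biSup_comap_inter_finset (hξ : IsCompletelyRandom Pr ξ)
    (hξm : Measurable ξ) {A₁ A₂ : Set D} (hA₁ : MeasurableSet A₁) (hA₂ : MeasurableSet A₂)
    (hA : Disjoint A₁ A₂) {F G : Finset (Set D)} (hF : ∀ s ∈ F, MeasurableSet s)
    (hG : ∀ s ∈ G, MeasurableSet s) :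
    Indep (⨆ s ∈ F, comap (fun ω => ξ ω (s ∩ A₁)) inferInstance)
      (⨆ s ∈ G, comap (fun ω => ξ ω (s ∩ A₂)) inferInstance) Pr := by
  set B := Sum.elim (partitionCell A₁ F) (partitionCell A₂ G)
  have hB : ∀ i, MeasurableSet (B i)
    | .inl c => measurableSet_partitionCell hA₁ hF c
    | .inr c => measurableSet_partitionCell hA₂ hG c
  have hdisj : Pairwise (Disjoint on B)
    | .inl _, .inl _, hne => pairwise_disjoint_partitionCell A₁ F (fun h => hne (h ▸ rfl))
    | .inl _, .inr _, _ => hA.mono (partitionCell_subset _ _ _) (partitionCell_subset _ _ _)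
    | .inr _, .inl _, _ => hA.symm.mono (partitionCell_subset _ _ _) (partitionCell_subset _ _ _)
    | .inr _, .inr _, hne => pairwise_disjoint_partitionCell A₂ G (fun h => hne (h ▸ rfl))
  have hcells := indep_iSup_of_disjoint
    (fun i => ((Measure.measurable_coe (hB i)).comp hξm).comap_le)
    (hξ.iIndepFun hB hdisj).iIndep Set.isCompl_range_inl_range_inr.disjoint
  rw [iSup_range, iSup_range] at hcells
  exact indep_of_indep_of_le hcells (biSup_comap_inter_le_iSup_comap_partitionCell ξ hA₁ hF)
    (biSup_comap_inter_le_iSup_comap_partitionCell ξ hA₂ hG)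

theorem IsCompletelyRandom.indepFun_restrict [IsProbabilityMeasure Pr]
    (hξ : IsCompletelyRandom Pr ξ) (hξm : Measurable ξ) {A₁ A₂ : Set D}
    (hA₁ : MeasurableSet A₁) (hA₂ : MeasurableSet A₂) (hA : Disjoint A₁ A₂) :
    IndepFun (fun ω => (ξ ω).restrict A₁) (fun ω => (ξ ω).restrict A₂) Pr := by
  have hcount : ∀ A, MeasurableSet A → ∀ s ∈ {s : Set D | MeasurableSet s},
      comap (fun ω => ξ ω (s ∩ A)) inferInstance ≤ ‹MeasurableSpace Ω› :=
    fun A hA s hs => ((Measure.measurable_coe (hs.inter hA)).comp hξm).comap_le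
  rw [IndepFun_iff_Indep]
  refine indep_of_indep_of_le ?_ (comap_restrict_le_biSup_comap_inter ξ A₁)
    (comap_restrict_le_biSup_comap_inter ξ A₂)
  exact indep_biSup_of_forall_finset (hcount A₁ hA₁) (hcount A₂ hA₂) fun F G hF hG =>
    hξ.indep_biSup_comap_inter_finset hξm hA₁ hA₂ hA hF hG

end RandomMeasure

theorem poissonPP_disjoint_restrictions_indep_general {Ω D : Type*}
    [MeasurableSpace Ω] [MeasurableSpace D]
    (Pr : Measure Ω) [IsProbabilityMeasure Pr]
    (P : Ω → Measure D) (lam : Measure D)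
    (h : IsPoissonPP Pr P lam)
    (D₁ D₂ : Set D) (h₁ : MeasurableSet D₁) (h₂ : MeasurableSet D₂)
    (hdisj : Disjoint D₁ D₂) :
    IndepFun (fun ω => (P ω).restrict D₁) (fun ω => (P ω).restrict D₂) Pr := by
  obtain ⟨hP, -, -, -, hcr⟩ := h
  exact IsCompletelyRandom.indepFun_restrict hcr hP h₁ h₂ hdisj

/-- The restrictions of a Poisson point process with s-finite intensity to two disjoint
measurable sets are independent (as random measures). -/
theorem poissonPP_disjoint_restrictions_indep {Ω D : Type*}
    [MeasurableSpace Ω] [MeasurableSpace D]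
    (Pr : Measure Ω) [IsProbabilityMeasure Pr]
    (P : Ω → Measure D) (lam : Measure D) [SFinite lam]
    (h : IsPoissonPP Pr P lam)
    (D₁ D₂ : Set D) (h₁ : MeasurableSet D₁) (h₂ : MeasurableSet D₂)
    (hdisj : Disjoint D₁ D₂) :
    IndepFun (fun ω => (P ω).restrict D₁) (fun ω => (P ω).restrict D₂) Pr :=
  poissonPP_disjoint_restrictions_indep_general Pr P lam h D₁ D₂ h₁ h₂ hdisj
end
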